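/- arXiv:1806.09482 — 2 statements merged into one kernel-verified Lean document; each statement's English description precedes it below -/
import Mathlib

section
/- Let u : ℝⁿ → ℝ be convex and differentiable and let C ≥ 1. Suppose the engulfing property holds: for all x₁, x₂ and h > 0, if x₂ ∈ S_h(x₁) then S_h(x₁) ⊆ S_{Ch}(x₂). Set δ = 1/C². Then for any x₁, x₂ and heights h₁ ≤ h₂: if S_{δh₁}(x₁) ∩ S_{δh₂}(x₂) ≠ ∅, then S_{δh₁}(x₁) ⊆ S_{h₂}(x₂). Here S_h(x) = {z : u(z) < u(x) + ∇u(x)·(z − x) + h}. -/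
open scoped RealInnerProductSpace

/-- Sub-level set of `u` at `x` of height `h`. -/
def subLevel {n : ℕ} (u : EuclideanSpace ℝ (Fin n) → ℝ)
    (x : EuclideanSpace ℝ (Fin n)) (h : ℝ) : Set (EuclideanSpace ℝ (Fin n)) :=
  {z | u z < u x + ⟪gradient u x, z - x⟫ + h}

section

variable {n : ℕ} (u : EuclideanSpace ℝ (Fin n) → ℝ)

lemma subLevel_mono (x : EuclideanSpace ℝ (Fin n)) {h h' : ℝ} (hh : h ≤ h') :
    subLevel u x h ⊆ subLevel u x h' :=
  fun _ hz => lt_of_lt_of_le hz (add_le_add_right hh _)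

lemma self_mem_subLevel (x : EuclideanSpace ℝ (Fin n)) {h : ℝ} (hh : 0 < h) :
    x ∈ subLevel u x h := by
  simpa [subLevel] using hh

def IsEngulfing (C : ℝ) : Prop :=
  ∀ (x₁ x₂ : EuclideanSpace ℝ (Fin n)) (h : ℝ), 0 < h →
    x₂ ∈ subLevel u x₁ h → subLevel u x₁ h ⊆ subLevel u x₂ (C * h)

namespace IsEngulfing

variable {u} {C h h₁ h₂ : ℝ} {x x₁ x₂ z : EuclideanSpace ℝ (Fin n)}

lemma mem_subLevel_symm (heng : IsEngulfing u C) (hh : 0 < h) (hz : z ∈ subLevel u x h) :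
    x ∈ subLevel u z (C * h) :=
  heng x z h hh hz (self_mem_subLevel u x hh)

lemma subLevel_subset_of_mem_inter (heng : IsEngulfing u C) (hC : 0 < C) (hh₁ : 0 < h₁)
    (h₁₂ : h₁ ≤ h₂) (hz₁ : z ∈ subLevel u x₁ h₁) (hz₂ : z ∈ subLevel u x₂ h₂) :
    subLevel u x₁ h₁ ⊆ subLevel u x₂ (C ^ 2 * h₂) := by
  have hh₂ : 0 < h₂ := hh₁.trans_le h₁₂
  calc subLevel u x₁ h₁
      ⊆ subLevel u z (C * h₁) := heng x₁ z h₁ hh₁ hz₁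
    _ ⊆ subLevel u z (C * h₂) := subLevel_mono u z (by gcongr)
    _ ⊆ subLevel u x₂ (C * (C * h₂)) :=
        heng z x₂ _ (mul_pos hC hh₂) (heng.mem_subLevel_symm hh₂ hz₂)
    _ = subLevel u x₂ (C ^ 2 * h₂) := by rw [← mul_assoc, sq]

end IsEngulfing

end

theorem stmt_3_general {n : ℕ} (u : EuclideanSpace ℝ (Fin n) → ℝ)
    (C : ℝ) (hC : 1 ≤ C)
    (heng : ∀ (x₁ x₂ : EuclideanSpace ℝ (Fin n)) (h : ℝ), 0 < h →
      x₂ ∈ subLevel u x₁ h → subLevel u x₁ h ⊆ subLevel u x₂ (C * h))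
    (x₁ x₂ : EuclideanSpace ℝ (Fin n)) (h₁ h₂ : ℝ) (hh₁ : 0 < h₁)
    (h₁₂ : h₁ ≤ h₂)
    (hint : (subLevel u x₁ ((1/C^2) * h₁) ∩
      subLevel u x₂ ((1/C^2) * h₂)).Nonempty) :
    subLevel u x₁ ((1/C^2) * h₁) ⊆ subLevel u x₂ h₂ := by
  obtain ⟨z, hz₁, hz₂⟩ := hint
  have heng : IsEngulfing u C := heng
  have hC₀ : 0 < C := zero_lt_one.trans_le hC
  have hδ : 0 < 1 / C ^ 2 := by positivity
  have hsub := heng.subLevel_subset_of_mem_inter hC₀ (mul_pos hδ hh₁) (by gcongr) hz₁ hz₂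
  rwa [← mul_assoc, mul_one_div_cancel (by positivity), one_mul] at hsub

/-- Lemma 4.3: from the engulfing property with constant `C`, setting
`δ = 1/C²`, if `h₁ ≤ h₂` and `S_{δh₁}(x₁) ∩ S_{δh₂}(x₂) ≠ ∅`, then
`S_{δh₁}(x₁) ⊆ S_{h₂}(x₂)`. -/
theorem stmt_3 {n : ℕ} (u : EuclideanSpace ℝ (Fin n) → ℝ)
    (hconv : ConvexOn ℝ Set.univ u) (hdiff : Differentiable ℝ u)
    (C : ℝ) (hC : 1 ≤ C)
    (heng : ∀ (x₁ x₂ : EuclideanSpace ℝ (Fin n)) (h : ℝ), 0 < h →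
      x₂ ∈ subLevel u x₁ h → subLevel u x₁ h ⊆ subLevel u x₂ (C * h))
    (x₁ x₂ : EuclideanSpace ℝ (Fin n)) (h₁ h₂ : ℝ) (hh₁ : 0 < h₁)
    (h₁₂ : h₁ ≤ h₂)
    (hint : (subLevel u x₁ ((1/C^2) * h₁) ∩
      subLevel u x₂ ((1/C^2) * h₂)).Nonempty) :
    subLevel u x₁ ((1/C^2) * h₁) ⊆ subLevel u x₂ h₂ :=
  stmt_3_general u C hC heng x₁ x₂ h₁ h₂ hh₁ h₁₂ hint
end

section
/- Suppose a family of sets {S(x, h)} indexed by points x in a metric-measure-type setting satisfies: (monotonicity) S(x,h₁) ⊆ S(x,h₂) for h₁ ≤ h₂, and (Lemma-4.3 property) there is δ ∈ (0,1) such that for h₁ ≤ h₂, if S(x₁, δh₁) ∩ S(x₂, δh₂) ≠ ∅ then S(x₁, δh₁) ⊆ S(x₂, h₂). Let D be a finite set of points with assigned heights h_x ≤ r₀. Then there is a subset {x₁, …, x_m} ⊆ D such that the sets S(x_i, δh_{x_i}) are pairwise disjoint and D ⊆ ⋃_i S(x_i, h_{x_i}), provided additionally x ∈ S(x, δh_x)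 for every x. -/
/-!
Greedy selection: take the index of largest height, discard every index whose shrunk set meets
its shrunk set, and recurse on the rest. A discarded point lies in its own shrunk set, which by
the engulfing property sits inside the full set of the chosen index of larger height.
-/

theorem Finset.exists_disjoint_subfamily_covering {ι α β : Type*} [LinearOrder β]
    (B : ι → Set α) (w : ι → β) (P : ι → ι → Prop) (D : Finset ι)
    (hne : ∀ x ∈ D, (B x).Nonempty)
    (hP : ∀ x ∈ D, ∀ y ∈ D, w x ≤ w y → ¬Disjoint (B x) (B y) → P x y) :
    ∃ T ⊆ D, (T : Set ι).PairwiseDisjoint B ∧ ∀ x ∈ D, ∃ y ∈ T, P x y := by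
  classical
  induction D using Finset.strongInduction with
  | _ D ih =>
  rcases D.eq_empty_or_nonempty with rfl | hD
  · exact ⟨∅, empty_subset _, by simp, by simp⟩
  obtain ⟨x₀, hx₀, hmax⟩ := D.exists_max_image w hD
  set D' := D.filter fun y => Disjoint (B y) (B x₀)
  have hD'D : D' ⊆ D := filter_subset _ _
  have hx₀D' : x₀ ∉ D' := fun h => (hne x₀ hx₀).ne_empty (disjoint_self.mp (mem_filter.mp h).2)
  obtain ⟨T, hTD', hTdisj, hTcov⟩ := ih D' ⟨hD'D, fun h => hx₀D' (h hx₀)⟩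
    (fun x hx => hne x (hD'D hx)) (fun x hx y hy => hP x (hD'D hx) y (hD'D hy))
  refine ⟨insert x₀ T, insert_subset hx₀ (hTD'.trans hD'D), ?_, fun x hx => ?_⟩
  · rw [coe_insert]
    exact hTdisj.insert fun y hy _ => (mem_filter.mp (hTD' hy)).2.symm
  · by_cases hxD' : x ∈ D'
    · obtain ⟨y, hy, hxy⟩ := hTcov x hxD'
      exact ⟨y, mem_insert_of_mem hy, hxy⟩
    · exact ⟨x₀, mem_insert_self _ _,
        hP x hx x₀ hx₀ (hmax x hx) fun h => hxD' (mem_filter.mpr ⟨hx, h⟩)⟩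

theorem stmt_14_general {X : Type*} (S : X → ℝ → Set X) (δ r₀ : ℝ)
    (hprop : ∀ (x₁ x₂ : X) (h₁ h₂ : ℝ), 0 < h₁ → h₁ ≤ h₂ →
      (S x₁ (δ * h₁) ∩ S x₂ (δ * h₂)).Nonempty → S x₁ (δ * h₁) ⊆ S x₂ h₂)
    (D : Finset X) (hx : X → ℝ)
    (hhx : ∀ x ∈ D, 0 < hx x ∧ hx x ≤ r₀)
    (hself : ∀ x ∈ D, x ∈ S x (δ * hx x)) :
    ∃ T : Finset X, T ⊆ D ∧
      (∀ x ∈ T, ∀ y ∈ T, x ≠ y → Disjoint (S x (δ * hx x)) (S y (δ * hx y))) ∧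
      ∀ x ∈ D, ∃ y ∈ T, x ∈ S y (hx y) := by
  obtain ⟨T, hTD, hTdisj, hTcov⟩ := Finset.exists_disjoint_subfamily_covering
    (fun x => S x (δ * hx x)) hx (fun x y => x ∈ S y (hx y)) D
    (fun x hxD => ⟨x, hself x hxD⟩)
    (fun x hxD y _ hxy hmeet => hprop x y _ _ (hhx x hxD).1 hxy
      (Set.not_disjoint_iff_nonempty_inter.mp hmeet) (hself x hxD))
  exact ⟨T, hTD, hTdisj, hTcov⟩

/-- Abstract Vitali covering lemma (Lemma 4.4): for a family of sets
`S(x,h)` that is monotone in `h`, satisfies the Lemma-4.3 property with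
parameter `δ`, and with `x ∈ S(x, δh_x)`, any finite set `D` of points with
heights `h_x ≤ r₀` admits a subfamily with pairwise disjoint `δ`-shrunk sets
whose full sets cover `D`. -/
theorem stmt_14 {X : Type*} (S : X → ℝ → Set X) (δ r₀ : ℝ)
    (hδ₁ : 0 < δ) (hδ₂ : δ < 1) (hr₀ : 0 < r₀)
    (hmono : ∀ (x : X) (h₁ h₂ : ℝ), h₁ ≤ h₂ → S x h₁ ⊆ S x h₂)
    (hprop : ∀ (x₁ x₂ : X) (h₁ h₂ : ℝ), 0 < h₁ → h₁ ≤ h₂ →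
      (S x₁ (δ * h₁) ∩ S x₂ (δ * h₂)).Nonempty → S x₁ (δ * h₁) ⊆ S x₂ h₂)
    (D : Finset X) (hx : X → ℝ)
    (hhx : ∀ x ∈ D, 0 < hx x ∧ hx x ≤ r₀)
    (hself : ∀ x ∈ D, x ∈ S x (δ * hx x)) :
    ∃ T : Finset X, T ⊆ D ∧
      (∀ x ∈ T, ∀ y ∈ T, x ≠ y → Disjoint (S x (δ * hx x)) (S y (δ * hx y))) ∧
      ∀ x ∈ D, ∃ y ∈ T, x ∈ S y (hx y) :=
  stmt_14_general S δ r₀ hprop D hx hhx hself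
end
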